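/- arXiv:2604.05123 — 2 statements merged into one kernel-verified Lean document; each statement's English description precedes it below -/
import Mathlib

section
/- Let G be a tdlc group (a Hausdorff, locally compact, totally disconnected topological group) and L a closed subgroup of G. Then every element g of G that commensurates L (i.e. such that gLg⁻¹ and L are commensurable) normalizes the discrete residual Res(L): g Res(L) g⁻¹ = Res(L). -/
/-- A subgroup `O` of `G` is relatively open in the subgroup `L`, i.e. open for the
subspace topology of `L`. -/
def relOpenIn {G : Type*} [Group G] [TopologicalSpace G] (L O : Subgroup G) : Prop :=
  ∃ V : Set G, IsOpen V ∧ (O : Set G) = V ∩ (L : Set G)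

/-- The discrete residual of a subgroup `L` of `G`: the intersection of all subgroups of `L`
that are open in `L` (for the subspace topology) and normal in `L`. -/
def residualIn {G : Type*} [Group G] [TopologicalSpace G] (L : Subgroup G) : Set G :=
  ⋂ O ∈ {O : Subgroup G | O ≤ L ∧ relOpenIn L O ∧ ∀ g ∈ L, ∀ x ∈ O, g * x * g⁻¹ ∈ O},
    (O : Set G)

/-- The conjugate `g A g⁻¹` of a subgroup. -/
def conjSubgroup {G : Type*} [Group G] (g : G) (A : Subgroup G) : Subgroup G :=
  A.map (MulAut.conj g).toMonoidHom

/-!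
Conjugation by `g` carries `Res(L)` onto `Res(gLg⁻¹)`, so it suffices that commensurable closed
subgroups have the same residual, and then that `Res(K) = Res(L)` for a closed subgroup `K ≤ L` of
finite index. Such a `K` is open in `L`, so open normal subgroups of `L` meet `K` in open normal
subgroups of `K`. Conversely, if `O` is open and normal in `K`, its conjugates under `L` depend
only on the coset modulo `K`, so there are finitely many of them and their intersection is an
open normal subgroup of `L` contained in `O`.
-/

open Pointwise ConjAct Subgroup

section Residual

variable {G : Type*} [Group G]

theorem smul_le_normalizer_smul {L O : Subgroup G} (h : L ≤ normalizer (O : Set G))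
    (c : ConjAct G) : c • L ≤ normalizer ((c • O : Subgroup G) : Set G) :=
  (map_mono h).trans (le_normalizer_map _)

theorem finite_range_smul_of_le_normalizer {K L O : Subgroup G}
    (hKO : K ≤ normalizer (O : Set G)) (hfin : K.relIndex L ≠ 0) :
    (Set.range fun y : L => toConjAct (y : G) • O).Finite := by
  have : (K.subgroupOf L).FiniteIndex := ⟨hfin⟩
  refine (Set.finite_range fun q : L ⧸ K.subgroupOf L => toConjAct (q.out : G) • O).subset ?_
  rintro _ ⟨y, rfl⟩
  obtain ⟨k, hk⟩ := QuotientGroup.mk_out_eq_mul (K.subgroupOf L) y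
  refine ⟨y, ?_⟩
  simp only [hk, coe_mul, map_mul, mul_smul]
  exact congrArg _ (conjAct_pointwise_smul_eq_self (hKO k.2))

variable [TopologicalSpace G]

theorem relOpenIn.le {L O : Subgroup G} (h : relOpenIn L O) : O ≤ L := by
  obtain ⟨V, -, hO⟩ := h
  intro x hx
  rw [← SetLike.mem_coe, hO] at hx
  exact hx.2

theorem relOpenIn_iff {L O : Subgroup G} :
    relOpenIn L O ↔ O ≤ L ∧ IsOpen (O.subgroupOf L : Set L) := by
  rw [isOpen_induced_iff]
  constructor
  · refine fun h => ⟨h.le, ?_⟩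
    obtain ⟨V, hV, hO⟩ := h
    refine ⟨V, hV, ?_⟩
    ext x
    rw [SetLike.mem_coe, mem_subgroupOf, ← SetLike.mem_coe, hO]
    simp
  · rintro ⟨hOL, V, hV, hO⟩
    refine ⟨V, hV, ?_⟩
    ext x
    simp only [Set.ext_iff, Set.mem_preimage, SetLike.mem_coe, Subtype.forall, mem_subgroupOf] at hO
    constructor
    · exact fun hx => ⟨(hO x (hOL hx)).mpr hx, hOL hx⟩
    · exact fun ⟨hxV, hxL⟩ => (hO x hxL).mp hxV

theorem relOpenIn.trans {K L O : Subgroup G} (hO : relOpenIn K O) (hK : relOpenIn L K) :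
    relOpenIn L O := by
  obtain ⟨V, hV, hOV⟩ := hO
  obtain ⟨W, hW, hKW⟩ := hK
  exact ⟨V ∩ W, hV.inter hW, by rw [hOV, hKW, Set.inter_assoc]⟩

theorem relOpenIn_iInf {ι : Type*} [Nonempty ι] {L : Subgroup G} {f : ι → Subgroup G}
    (hf : (Set.range f).Finite) (h : ∀ i, relOpenIn L (f i)) : relOpenIn L (⨅ i, f i) := by
  rw [relOpenIn_iff]
  refine ⟨iInf_le_of_le (Classical.arbitrary ι) (h _).le, ?_⟩
  have : ((⨅ i, f i).subgroupOf L : Set L) = ⋂ S ∈ Set.range f, (S.subgroupOf L : Set L) := by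
    ext; simp [mem_subgroupOf, mem_iInf]
  rw [this]
  exact hf.isOpen_biInter (by rintro _ ⟨i, rfl⟩; exact (relOpenIn_iff.mp (h i)).2)

theorem mem_residualIn_iff {L : Subgroup G} {x : G} :
    x ∈ residualIn L ↔ ∀ O : Subgroup G, relOpenIn L O → L ≤ normalizer (O : Set G) → x ∈ O := by
  simp only [residualIn, Set.mem_iInter, Set.mem_ofPred_eq, SetLike.mem_coe, le_normalizer_iff]
  exact ⟨fun h O hO hLO => h O ⟨hO.le, hO, hLO⟩, fun h O hO => h O hO.2.1 hO.2.2⟩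

theorem residualIn_mono {K L : Subgroup G} (hKL : K ≤ L) : residualIn K ⊆ residualIn L := by
  intro x hx
  rw [mem_residualIn_iff] at hx ⊢
  rintro O ⟨V, hV, hO⟩ hLO
  refine (hx (O ⊓ K) ⟨V, hV, ?_⟩ ?_).1
  · rw [coe_inf, hO, Set.inter_assoc, Set.inter_eq_right.mpr hKL]
  · rw [le_normalizer_iff] at hLO ⊢
    exact fun k hk y hy => ⟨hLO k (hKL hk) y hy.1, K.mul_mem (K.mul_mem hk hy.2) (K.inv_mem hk)⟩

section SeparatelyContinuousMul

variable [SeparatelyContinuousMul G]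

theorem relOpenIn.smul {L O : Subgroup G} (h : relOpenIn L O) (c : ConjAct G) :
    relOpenIn (c • L) (c • O) := by
  obtain ⟨V, hV, hO⟩ := h
  exact ⟨c • V, hV.smul c, by
    rw [coe_pointwise_smul, coe_pointwise_smul, hO, Set.smul_set_inter]⟩

theorem smul_residualIn_subset (c : ConjAct G) (L : Subgroup G) :
    c • residualIn L ⊆ residualIn (c • L) := by
  rintro _ ⟨x, hx, rfl⟩
  rw [mem_residualIn_iff] at hx ⊢
  intro O hO hLO
  have hx' := hx (c⁻¹ • O) (by simpa using hO.smul c⁻¹)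
    (by simpa using smul_le_normalizer_smul hLO c⁻¹)
  simpa [mem_pointwise_smul_iff_inv_smul_mem] using hx'

theorem residualIn_smul (c : ConjAct G) (L : Subgroup G) :
    residualIn (c • L) = c • residualIn L := by
  refine subset_antisymm ?_ (smul_residualIn_subset c L)
  rw [Set.subset_smul_set_iff]
  simpa using smul_residualIn_subset c⁻¹ (c • L)

theorem residualIn_subset_of_relOpenIn {K L : Subgroup G} (hK : relOpenIn L K)
    (hfin : K.relIndex L ≠ 0) : residualIn L ⊆ residualIn K := by
  intro x hx
  rw [mem_residualIn_iff] at hx ⊢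
  intro O hO hKO
  -- the normal core of `O` in `L`
  let N : Subgroup G := ⨅ y : L, toConjAct (y : G) • O
  have hNO : N ≤ O := iInf_le_of_le 1 (by simp)
  have hN : relOpenIn L N := by
    refine relOpenIn_iInf (finite_range_smul_of_le_normalizer hKO hfin) fun y => ?_
    simpa [conjAct_pointwise_smul_eq_self (le_normalizer y.2)] using
      (hO.trans hK).smul (toConjAct (y : G))
  have hLN : L ≤ normalizer (N : Set G) := by
    rw [le_normalizer_iff]
    intro y hy z hz
    simp only [N, mem_iInf, mem_pointwise_smul_iff_inv_smul_mem] at hz ⊢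
    intro w
    simpa [ConjAct.smul_def, mul_assoc] using hz ⟨y⁻¹ * w, L.mul_mem (L.inv_mem hy) w.2⟩
  exact hNO (hx N hN hLN)

end SeparatelyContinuousMul

variable [IsTopologicalGroup G]

theorem relOpenIn_of_isClosed {K L : Subgroup G} (hKL : K ≤ L) (hK : IsClosed (K : Set G))
    (hfin : K.relIndex L ≠ 0) : relOpenIn L K := by
  have : (K.subgroupOf L).FiniteIndex := ⟨hfin⟩
  exact relOpenIn_iff.mpr ⟨hKL, (K.subgroupOf L).isOpen_of_isClosed_of_finiteIndex
    (hK.preimage continuous_subtype_val)⟩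

theorem residualIn_eq_of_isClosed_of_relIndex_ne_zero {K L : Subgroup G} (hKL : K ≤ L)
    (hK : IsClosed (K : Set G)) (hfin : K.relIndex L ≠ 0) : residualIn K = residualIn L :=
  subset_antisymm (residualIn_mono hKL)
    (residualIn_subset_of_relOpenIn (relOpenIn_of_isClosed hKL hK hfin) hfin)

theorem residualIn_eq_of_commensurable {L M : Subgroup G} (hL : IsClosed (L : Set G))
    (hM : IsClosed (M : Set G)) (h : Commensurable L M) : residualIn L = residualIn M := by
  have hLM : IsClosed ((L ⊓ M : Subgroup G) : Set G) := hL.inter hM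
  calc residualIn L = residualIn (L ⊓ M) :=
        (residualIn_eq_of_isClosed_of_relIndex_ne_zero inf_le_left hLM
          (by rw [inf_relIndex_left]; exact h.2)).symm
    _ = residualIn M :=
        residualIn_eq_of_isClosed_of_relIndex_ne_zero inf_le_right hLM
          (by rw [inf_relIndex_right]; exact h.1)

end Residual

theorem stmt1_general {G : Type*} [Group G] [TopologicalSpace G] [IsTopologicalGroup G]
    (L : Subgroup G) (hLclosed : IsClosed (L : Set G)) (g : G)
    (hg : Subgroup.Commensurable (conjSubgroup g L) L) :
    (fun x => g * x * g⁻¹) '' residualIn L = residualIn L := by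
  -- both `conjSubgroup g` and the image under `x ↦ g x g⁻¹` are the action of `toConjAct g`
  change toConjAct g • residualIn L = residualIn L
  rw [← residualIn_smul]
  exact residualIn_eq_of_commensurable (hLclosed.smul (toConjAct g)) hLclosed hg

theorem stmt1 {G : Type*} [Group G] [TopologicalSpace G] [IsTopologicalGroup G]
    [T2Space G] [LocallyCompactSpace G] [TotallyDisconnectedSpace G]
    (L : Subgroup G) (hLclosed : IsClosed (L : Set G)) (g : G)
    (hg : Subgroup.Commensurable (conjSubgroup g L) L) :
    (fun x => g * x * g⁻¹) '' residualIn L = residualIn L :=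
  stmt1_general L hLclosed g hg
end

section
/- Let G be a tdlc group (a Hausdorff, locally compact, totally disconnected topological group) admitting a compact open subgroup with trivial normal core, and let Γ be a finitely generated cocompact lattice of G. Let K be a compact normal subgroup of G and H a finitely generated subgroup of the commensurator Comm_G(Γ) such that the subgroup KH (the subgroup generated by K and H, which equals the set product since K is normal) is virtually contained in the subgroup KΓ. Then H is virtually contained in Γ. -/
open Subgroup Pointwise Filter Topology

section

variable {G : Type*} [Group G]

lemma mem_commensurator_iff_conjSubgroup {Γ : Subgroup G} {g : G} :
    g ∈ Subgroup.Commensurable.commensurator Γ ↔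
      Subgroup.Commensurable (conjSubgroup g Γ) Γ := Iff.rfl

namespace Subgroup

lemma le_commensurator (Γ : Subgroup G) : Γ ≤ Commensurable.commensurator Γ := fun γ hγ => by
  rw [Commensurable.commensurator_mem_iff, conjAct_pointwise_smul_eq_self (le_normalizer hγ)]

lemma FG.of_le_of_relIndex_ne_zero {L H : Subgroup G} (hH : H.FG) (hL : L ≤ H)
    (hLH : L.relIndex H ≠ 0) : L.FG := by
  have : Group.FG H := (Group.fg_iff_subgroup_fg H).2 hH
  have : (L.subgroupOf H).FiniteIndex := ⟨hLH⟩
  rw [← Group.fg_iff_subgroup_fg]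
  exact Group.fg_of_surjective (f := (subgroupOfEquivOfLe hL).toMonoidHom)
    (subgroupOfEquivOfLe hL).surjective

lemma conj_eq_conj_iff_inv_mul_mem_centralizer {x y k : G} :
    x * k * x⁻¹ = y * k * y⁻¹ ↔ x⁻¹ * y ∈ centralizer {k} := by
  rw [mem_centralizer_singleton_iff]
  constructor <;> intro h
  · calc x⁻¹ * y * k = x⁻¹ * (y * k * y⁻¹) * y := by group
      _ = x⁻¹ * (x * k * x⁻¹) * y := by rw [h]
      _ = k * (x⁻¹ * y) := by group
  · calc x * k * x⁻¹ = x * (k * (x⁻¹ * y)) * y⁻¹ := by group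
      _ = x * (x⁻¹ * y * k) * y⁻¹ := by rw [h]
      _ = y * k * y⁻¹ := by group

lemma relIndex_centralizer_ne_zero_of_forall_conj_mem {D : Subgroup G} {k : G} {F : Set G}
    (hF : F.Finite) (hDF : ∀ x ∈ D, x * k * x⁻¹ ∈ F) : (centralizer {k}).relIndex D ≠ 0 := by
  let conj : D ⧸ (centralizer {k}).subgroupOf D → F := fun q =>
    q.liftOn' (fun x => ⟨x * k * (x : G)⁻¹, hDF x x.2⟩) fun x y hxy =>
      Subtype.ext (conj_eq_conj_iff_inv_mul_mem_centralizer.2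
        (mem_subgroupOf.1 (QuotientGroup.leftRel_apply.1 hxy)))
  have hconj : Function.Injective conj := by
    rintro ⟨x⟩ ⟨y⟩ hxy
    exact Quotient.sound' (QuotientGroup.leftRel_apply.2 (mem_subgroupOf.2
      (conj_eq_conj_iff_inv_mul_mem_centralizer.1 (congrArg Subtype.val hxy))))
  have := hF.to_subtype
  have := Finite.of_injective _ hconj
  exact index_ne_zero_of_finite

lemma relIndex_centralizer_ne_zero_of_mem_commensurator {Γ K : Subgroup G} [K.Normal]
    (hKΓ : ((K ⊓ Γ : Subgroup G) : Set G).Finite) {k : G} (hkK : k ∈ K)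
    (hk : k ∈ Commensurable.commensurator Γ) : (centralizer {k}).relIndex Γ ≠ 0 := by
  set D := (ConjAct.toConjAct k⁻¹ • Γ) ⊓ Γ
  have hD : D.relIndex Γ ≠ 0 := by
    rw [inf_relIndex_right]
    exact ((Commensurable.commensurator Γ).inv_mem hk).1
  have hconj : ∀ x ∈ D, x * k * x⁻¹ ∈ (· * k) '' ((K ⊓ Γ : Subgroup G) : Set G) := by
    intro x hx
    obtain ⟨hxk, hxΓ⟩ := mem_inf.1 hx
    rw [mem_pointwise_smul_iff_inv_smul_mem, ← map_inv, inv_inv, ConjAct.toConjAct_smul] at hxk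
    have hcomm : x * k * x⁻¹ * k⁻¹ = x * (k * x * k⁻¹)⁻¹ := by group
    refine ⟨x * k * x⁻¹ * k⁻¹, mem_inf.2 ⟨?_, ?_⟩, by group⟩
    · exact mul_mem (Normal.conj_mem ‹_› k hkK x) (inv_mem hkK)
    · exact hcomm ▸ mul_mem hxΓ (inv_mem hxk)
  exact relIndex_ne_zero_trans
    (relIndex_centralizer_ne_zero_of_forall_conj_mem (hKΓ.image _) hconj) hD

lemma relIndex_centralizer_ne_zero_of_finite {Γ : Subgroup G} {S : Set G} (hS : S.Finite)
    (h : ∀ k ∈ S, (centralizer {k}).relIndex Γ ≠ 0) : (centralizer S).relIndex Γ ≠ 0 := by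
  have := hS.to_subtype
  rw [centralizer_eq_iInf, iInf_subtype']
  exact relIndex_iInf_ne_zero fun k => h k k.2

lemma exists_le_normalizer_relIndex_ne_zero {Γ T : Subgroup G} (hT : T.relIndex Γ ≠ 0) :
    ∃ Δ ≤ T, Δ.relIndex Γ ≠ 0 ∧ Γ ≤ normalizer (Δ : Set G) := by
  have : (T.subgroupOf Γ).FiniteIndex := ⟨hT⟩
  have hcore : ((T.subgroupOf Γ).normalCore.map Γ.subtype).subgroupOf Γ
      = (T.subgroupOf Γ).normalCore :=
    comap_map_eq_self_of_injective Γ.subtype_injective _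
  refine ⟨(T.subgroupOf Γ).normalCore.map Γ.subtype, map_le_iff_le_comap.2 (normalCore_le _),
    ?_, (normal_subgroupOf_iff_le_normalizer (map_subtype_le _)).1 (by rw [hcore]; infer_instance)⟩
  rw [relIndex, hcore]
  exact FiniteIndex.index_ne_zero

lemma le_normalizer_centralizer {Γ Δ : Subgroup G} (h : Γ ≤ normalizer (Δ : Set G)) :
    Γ ≤ normalizer (centralizer (Δ : Set G) : Set G) := by
  rw [le_normalizer_iff] at h ⊢
  intro γ hγ c hc
  rw [mem_centralizer_iff] at hc ⊢
  intro d hd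
  have hdc := hc (γ⁻¹ * d * γ) (by simpa using h γ⁻¹ (inv_mem hγ) d hd)
  calc d * (γ * c * γ⁻¹) = γ * (γ⁻¹ * d * γ * c) * γ⁻¹ := by group
    _ = γ * (c * (γ⁻¹ * d * γ)) * γ⁻¹ := by rw [hdc]
    _ = γ * c * γ⁻¹ * d := by group

lemma relIndex_sup_ne_zero_of_finite {C Γ : Subgroup G} (hC : (C : Set G).Finite)
    (hΓ : Γ ≤ normalizer (C : Set G)) : Γ.relIndex (C ⊔ Γ) ≠ 0 := by
  have hmul := coe_mul_of_right_le_normalizer_left C Γ hΓ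
  have : Finite C := hC.to_subtype
  have hsurj : Function.Surjective fun c : C =>
      (inclusion (le_sup_left : C ≤ C ⊔ Γ) c : ↥(C ⊔ Γ) ⧸ Γ.subgroupOf (C ⊔ Γ)) := by
    rintro ⟨x, hx⟩
    obtain ⟨c, hc, γ, hγ, rfl⟩ : x ∈ (C : Set G) * Γ := hmul ▸ hx
    refine ⟨⟨c, hc⟩, QuotientGroup.eq.2 (mem_subgroupOf.2 ?_)⟩
    simpa using hγ
  have := Finite.of_surjective _ hsurj
  exact index_ne_zero_of_finite

lemma exists_finite_subset_mul_of_relIndex_ne_zero {Δ Γ : Subgroup G}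
    (h : Δ.relIndex Γ ≠ 0) : ∃ R : Set G, R.Finite ∧ (Γ : Set G) ⊆ R * Δ := by
  have : (Δ.subgroupOf Γ).FiniteIndex := ⟨h⟩
  refine ⟨Set.range fun q : Γ ⧸ Δ.subgroupOf Γ => (q.out : G), Set.finite_range _, fun γ hγ => ?_⟩
  set q : Γ ⧸ Δ.subgroupOf Γ := QuotientGroup.mk ⟨γ, hγ⟩
  exact ⟨q.out, Set.mem_range_self q, (q.out : G)⁻¹ * γ,
    mem_subgroupOf.1 (QuotientGroup.eq.1 (QuotientGroup.out_eq' q)), mul_inv_cancel_left _ _⟩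

end Subgroup

section Topological

variable [TopologicalSpace G] [IsTopologicalGroup G]

lemma IsCompact.finite_inter_of_discreteTopology [T2Space G] {s : Set G} (hs : IsCompact s)
    (Γ : Subgroup G) [DiscreteTopology Γ] : (s ∩ Γ).Finite := by
  have : DiscreteTopology ↥(s ∩ Γ) := .of_subset ‹_› Set.inter_subset_right
  exact (hs.inter_right isClosed_of_discrete).finite (isDiscrete_iff_discreteTopology.2 this)

lemma IsCompact.eventually_forall_conj_mem {C₀ U : Set G} (hC₀ : IsCompact C₀)
    (hU : U ∈ 𝓝 (1 : G)) : ∀ᶠ w in 𝓝 (1 : G), ∀ c ∈ C₀, c * w * c⁻¹ ∈ U :=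
  hC₀.eventually_forall_of_forall_eventually fun c _ => by
    have hconj : Continuous fun p : G × G => p.2 * p.1 * p.2⁻¹ := by fun_prop
    have : Tendsto (fun p : G × G => p.2 * p.1 * p.2⁻¹) (𝓝 (1, c)) (𝓝 1) := by
      simpa using hconj.tendsto (1, c)
    exact this.eventually_mem hU

lemma exists_isCompact_mul_eq_univ [WeaklyLocallyCompactSpace G] (Γ : Subgroup G)
    [CompactSpace (G ⧸ Γ)] : ∃ C₀ : Set G, IsCompact C₀ ∧ C₀ * (Γ : Set G) = Set.univ := by
  choose N hN hgN using fun g : G => exists_compact_mem_nhds g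
  obtain ⟨t, ht⟩ := isCompact_univ.elim_finite_subcover
    (fun g => ((↑) : G → G ⧸ Γ) '' interior (N g))
    (fun g => QuotientGroup.isOpenMap_coe _ isOpen_interior)
    fun q _ => q.inductionOn fun g =>
      Set.mem_iUnion.2 ⟨g, g, mem_interior_iff_mem_nhds.2 (hgN g), rfl⟩
  refine ⟨⋃ g ∈ t, N g, t.isCompact_biUnion fun g _ => hN g, Set.eq_univ_of_forall fun x => ?_⟩
  obtain ⟨g, hg, c, hc, hcx⟩ := Set.mem_iUnion₂.1 (ht (Set.mem_univ (x : G ⧸ Γ)))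
  exact ⟨c, Set.mem_biUnion hg (interior_subset hc), c⁻¹ * x, QuotientGroup.eq.1 hcx,
    mul_inv_cancel_left c x⟩

lemma exists_isCompact_mul_eq_univ_of_relIndex_ne_zero [WeaklyLocallyCompactSpace G]
    {Δ Γ : Subgroup G} [CompactSpace (G ⧸ Γ)] (h : Δ.relIndex Γ ≠ 0) :
    ∃ C₀ : Set G, IsCompact C₀ ∧ C₀ * (Δ : Set G) = Set.univ := by
  obtain ⟨C₀, hC₀, hC₀Γ⟩ := exists_isCompact_mul_eq_univ Γ
  obtain ⟨R, hR, hΓR⟩ := exists_finite_subset_mul_of_relIndex_ne_zero h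
  refine ⟨C₀ * R, hC₀.mul hR.isCompact, Set.univ_subset_iff.1 ?_⟩
  calc Set.univ = C₀ * (Γ : Set G) := hC₀Γ.symm
    _ ⊆ C₀ * (R * Δ) := Set.mul_subset_mul_left hΓR
    _ = C₀ * R * Δ := (mul_assoc _ _ _).symm

lemma finite_of_isCompact_of_le_centralizer {U Δ C : Subgroup G} (hU : IsOpen (U : Set G))
    (hUcore : U.normalCore = ⊥) {C₀ : Set G} (hC₀ : IsCompact C₀)
    (hC₀Δ : C₀ * (Δ : Set G) = Set.univ) (hC : IsCompact (C : Set G))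
    (hCΔ : C ≤ centralizer (Δ : Set G)) : (C : Set G).Finite := by
  obtain ⟨V, hVU, hV, h1V⟩ :=
    eventually_nhds_iff.1 (hC₀.eventually_forall_conj_mem (hU.mem_nhds U.one_mem))
  have hCV : ∀ z ∈ C, z ∈ V → z = 1 := by
    intro z hz hzV
    rw [← Subgroup.mem_bot, ← hUcore]
    intro b
    obtain ⟨c, hc, δ, hδ, rfl⟩ : b ∈ C₀ * (Δ : Set G) := hC₀Δ ▸ Set.mem_univ b
    have hδz : δ * z = z * δ := mem_centralizer_iff.1 (hCΔ hz) δ hδ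
    have : c * δ * z * (c * δ)⁻¹ = c * z * c⁻¹ := by
      rw [mul_assoc c δ z, hδz]; group
    exact this ▸ hVU z hzV c hc
  have : DiscreteTopology C := by
    refine discreteTopology_of_isOpen_singleton_one ?_
    convert hV.preimage continuous_subtype_val
    ext ⟨z, hz⟩
    simp only [Set.mem_singleton_iff, Set.mem_preimage, Subgroup.mk_eq_one]
    exact ⟨fun h => h ▸ h1V, hCV z hz⟩
  have : CompactSpace C := isCompact_iff_compactSpace.1 hC
  have : Finite C := finite_of_compact_of_discrete
  exact Set.toFinite _

theorem exists_finite_le_normalizer_subset_sup [T2Space G] [WeaklyLocallyCompactSpace G]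
    {U Γ K : Subgroup G} [CompactSpace (G ⧸ Γ)] [K.Normal] (hU : IsOpen (U : Set G))
    (hUcore : U.normalCore = ⊥) (hK : IsCompact (K : Set G))
    (hKΓ : ((K ⊓ Γ : Subgroup G) : Set G).Finite) {S : Set G} (hS : S.Finite)
    (hSK : S ⊆ (K ⊔ Γ : Subgroup G)) (hSΓ : S ⊆ Commensurable.commensurator Γ) :
    ∃ C : Subgroup G, (C : Set G).Finite ∧ Γ ≤ normalizer (C : Set G) ∧
      S ⊆ (C ⊔ Γ : Subgroup G) := by
  have hgen : ∀ s ∈ S, ∃ k ∈ K, k⁻¹ * s ∈ Γ ∧ (centralizer {k}).relIndex Γ ≠ 0 := by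
    intro s hs
    obtain ⟨k, hk, γ, hγ, rfl⟩ : s ∈ (K : Set G) * Γ := normal_mul K Γ ▸ hSK hs
    refine ⟨k, hk, by simpa using hγ, relIndex_centralizer_ne_zero_of_mem_commensurator hKΓ hk ?_⟩
    simpa using mul_mem (hSΓ hs) (inv_mem (le_commensurator Γ hγ))
  choose! k hkK hkΓ hk using hgen
  obtain ⟨Δ, hΔk, hΔ, hΓΔ⟩ := exists_le_normalizer_relIndex_ne_zero
    (relIndex_centralizer_ne_zero_of_finite (hS.image k) (Set.forall_mem_image.2 hk))
  obtain ⟨C₀, hC₀, hC₀Δ⟩ := exists_isCompact_mul_eq_univ_of_relIndex_ne_zero hΔ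
  refine ⟨K ⊓ centralizer Δ, finite_of_isCompact_of_le_centralizer hU hUcore hC₀ hC₀Δ
    (hK.inter_right (Set.isClosed_centralizer _)) inf_le_right,
    (le_inf le_normalizer_of_normal (le_normalizer_centralizer hΓΔ)).trans
      inf_normalizer_le_normalizer_inf, fun s hs => ?_⟩
  have hks : k s ∈ centralizer (Δ : Set G) := mem_centralizer_iff.2 fun d hd =>
    (mem_centralizer_iff.1 (hΔk hd) (k s) (Set.mem_image_of_mem k hs)).symm
  simpa using mul_mem (mem_sup_left (mem_inf.2 ⟨hkK s hs, hks⟩)) (mem_sup_right (hkΓ s hs))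

end Topological

end

theorem stmt12_general {G : Type*} [Group G] [TopologicalSpace G] [IsTopologicalGroup G]
    [T2Space G] [LocallyCompactSpace G]
    (U : Subgroup G) (hUopen : IsOpen (U : Set G))
    (hUcore : U.normalCore = ⊥)
    (Γ : Subgroup G) (hdisc : DiscreteTopology ↥Γ) (hcoc : CompactSpace (G ⧸ Γ))
    (K : Subgroup G) (hKnormal : K.Normal) (hKcompact : IsCompact (K : Set G))
    (H : Subgroup G) (hHcomm : ∀ h ∈ H, Subgroup.Commensurable (conjSubgroup h Γ) Γ) (hHfg : H.FG)
    (hvirt : (K ⊔ Γ).relIndex (K ⊔ H) ≠ 0) :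
    Γ.relIndex H ≠ 0 := by
  set H₁ := H ⊓ (K ⊔ Γ)
  have hH₁ : H₁.relIndex H ≠ 0 := by
    rw [inf_relIndex_left]
    exact mt (relIndex_eq_zero_of_le_right le_sup_right) hvirt
  obtain ⟨S, hS_gen, hS⟩ := (fg_iff H₁).1 (hHfg.of_le_of_relIndex_ne_zero inf_le_left hH₁)
  have hSH₁ : S ⊆ H₁ := hS_gen ▸ subset_closure
  obtain ⟨C, hC, hΓC, hSC⟩ := exists_finite_le_normalizer_subset_sup hUopen hUcore hKcompact
    (by rw [coe_inf]; exact hKcompact.finite_inter_of_discreteTopology Γ) hS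
    (fun s hs => (hSH₁ hs).2)
    fun s hs => mem_commensurator_iff_conjSubgroup.2 (hHcomm s (hSH₁ hs).1)
  have hH₁C : H₁ ≤ C ⊔ Γ := hS_gen ▸ (closure_le _).2 hSC
  exact relIndex_ne_zero_trans
    (mt (relIndex_eq_zero_of_le_right hH₁C) (relIndex_sup_ne_zero_of_finite hC hΓC)) hH₁

theorem stmt12 {G : Type*} [Group G] [TopologicalSpace G] [IsTopologicalGroup G]
    [T2Space G] [LocallyCompactSpace G] [TotallyDisconnectedSpace G]
    (U : Subgroup G) (hUcompact : IsCompact (U : Set G)) (hUopen : IsOpen (U : Set G))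
    (hUcore : U.normalCore = ⊥)
    (Γ : Subgroup G) (hdisc : DiscreteTopology ↥Γ) (hcoc : CompactSpace (G ⧸ Γ))
    (hfg : Γ.FG)
    (K : Subgroup G) (hKnormal : K.Normal) (hKcompact : IsCompact (K : Set G))
    (H : Subgroup G) (hHcomm : ∀ h ∈ H, Subgroup.Commensurable (conjSubgroup h Γ) Γ) (hHfg : H.FG)
    (hvirt : (K ⊔ Γ).relIndex (K ⊔ H) ≠ 0) :
    Γ.relIndex H ≠ 0 :=
  stmt12_general U hUopen hUcore Γ hdisc hcoc K hKnormal hKcompact H hHcomm hHfg hvirt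
end
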